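/- For every integer n ≥ 9, the equidistant dimension of the Johnson graph J(n,3) is at most n − 2. -/

import Mathlib

/-- The Johnson graph `J(n,k)`: vertices are the `k`-element subsets of an `n`-element set,
two vertices being adjacent iff their intersection has cardinality `k-1`. -/
def johnsonGraph (n k : ℕ) : SimpleGraph {A : Finset (Fin n) // A.card = k} where
  Adj A B := A ≠ B ∧ (A.1 ∩ B.1).card = k - 1
  symm := ⟨fun A B ⟨hne, hc⟩ => ⟨hne.symm, by rwa [Finset.inter_comm]⟩⟩
  loopless := ⟨fun A ⟨hne, _⟩ => hne rfl⟩

/-- The Kneser graph `K(n,k)`: vertices are the `k`-element subsets of an `n`-element set,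
two vertices being adjacent iff they are disjoint. -/
def kneserGraph (n k : ℕ) : SimpleGraph {A : Finset (Fin n) // A.card = k} where
  Adj A B := A ≠ B ∧ A.1 ∩ B.1 = ∅
  symm := ⟨fun A B ⟨hne, hc⟩ => ⟨hne.symm, by rwa [Finset.inter_comm]⟩⟩
  loopless := ⟨fun A ⟨hne, _⟩ => hne rfl⟩

/-- `S` is a distance-equalizer set of `G` if for every two distinct vertices
`u, v ∉ S` there is a vertex `x ∈ S` equidistant from `u` and `v`. -/
def IsDistanceEqualizerSet {V : Type*} (G : SimpleGraph V) (S : Set V) : Prop :=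
  ∀ u v : V, u ∉ S → v ∉ S → u ≠ v → ∃ x ∈ S, G.dist u x = G.dist v x

/-- The equidistant dimension of `G`: the minimum cardinality of a distance-equalizer set. -/
noncomputable def eqdim {V : Type*} [Fintype V] (G : SimpleGraph V) : ℕ :=
  sInf {m | ∃ S : Finset V, IsDistanceEqualizerSet G ↑S ∧ S.card = m}

instance (n k : ℕ) : DecidableRel (johnsonGraph n k).Adj :=
  fun A B => inferInstanceAs (Decidable (A ≠ B ∧ (A.1 ∩ B.1).card = k - 1))

instance (n k : ℕ) : DecidableRel (kneserGraph n k).Adj :=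
  fun A B => inferInstanceAs (Decidable (A ≠ B ∧ A.1 ∩ B.1 = ∅))

open Finset SimpleGraph


lemma johnson_walk_le (n : ℕ) : ∀ (t : ℕ) (A B : {A : Finset (Fin n) // A.card = 3}),
    3 ≤ t + (A.1 ∩ B.1).card → ∃ w : (johnsonGraph n 3).Walk A B, w.length ≤ t := by
  intro t
  induction t with
  | zero =>
    intro A B h
    have h1 : A.1 ∩ B.1 ⊆ A.1 := inter_subset_left
    have h2 : A.1 ∩ B.1 = A.1 := eq_of_subset_of_card_le h1 (by omega)
    have h3 : A.1 ⊆ B.1 := h2 ▸ inter_subset_right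
    have hAB : A = B := Subtype.ext (eq_of_subset_of_card_le h3 (by rw [A.2, B.2]))
    subst hAB; exact ⟨Walk.nil, le_refl 0⟩
  | succ t ih =>
    intro A B h
    by_cases h3 : 3 ≤ t + (A.1 ∩ B.1).card
    · obtain ⟨w, hw⟩ := ih A B h3
      exact ⟨w, hw.trans (Nat.le_succ t)⟩
    · have hc3 : (A.1 ∩ B.1).card < 3 := by omega
      have hA : (A.1 \ B.1).Nonempty := by
        rw [← card_pos]
        have := card_inter_add_card_sdiff A.1 B.1
        omega
      have hB : (B.1 \ A.1).Nonempty := by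
        rw [← card_pos]
        have := card_inter_add_card_sdiff B.1 A.1
        rw [inter_comm] at this
        omega
      obtain ⟨a, ha⟩ := hA
      obtain ⟨b, hb⟩ := hB
      rw [mem_sdiff] at ha hb
      have haA : a ∈ A.1 := ha.1
      have hbA : b ∉ A.1 := hb.2
      have hbB : b ∈ B.1 := hb.1
      have haB : a ∉ B.1 := ha.2
      have hbe : b ∉ A.1.erase a := fun hx => hbA (mem_of_mem_erase hx)
      have hcardE : (A.1.erase a).card = 2 := by rw [card_erase_of_mem haA, A.2]
      have hcard' : (insert b (A.1.erase a)).card = 3 := by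
        rw [card_insert_of_notMem hbe, hcardE]
      set A' : {A : Finset (Fin n) // A.card = 3} := ⟨insert b (A.1.erase a), hcard'⟩ with hA'
      have hne : A ≠ A' := by
        intro hEq
        apply hbA
        rw [hEq]
        exact mem_insert_self b _
      have hadj : (johnsonGraph n 3).Adj A A' := by
        refine ⟨hne, ?_⟩
        have : A.1 ∩ A'.1 = A.1.erase a := by
          rw [inter_comm]
          show insert b (A.1.erase a) ∩ A.1 = A.1.erase a
          rw [insert_inter_of_notMem hbA]
          exact inter_eq_left.mpr (erase_subset a A.1)
        rw [this, hcardE]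
      have hinter : (A'.1 ∩ B.1).card = (A.1 ∩ B.1).card + 1 := by
        have h1 : A'.1 ∩ B.1 = insert b (A.1 ∩ B.1) := by
          show insert b (A.1.erase a) ∩ B.1 = _
          rw [insert_inter_of_mem hbB, erase_inter, erase_eq_of_notMem]
          simp [haB]
        rw [h1, card_insert_of_notMem (fun hx => hbA (mem_inter.mp hx).1)]
      obtain ⟨w, hw⟩ := ih A' B (by omega)
      exact ⟨Walk.cons hadj w, by simpa using Nat.succ_le_succ hw⟩

lemma johnson_walk_ge (n : ℕ) {A B : {A : Finset (Fin n) // A.card = 3}}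
    (w : (johnsonGraph n 3).Walk A B) : 3 ≤ w.length + (A.1 ∩ B.1).card := by
  induction w with
  | nil => simp [inter_self]; omega
  | @cons A C B h p ih =>
    have hCB : (C.1 ∩ B.1).card ≤ (A.1 ∩ B.1).card + 1 := by
      have hsub : C.1 ∩ B.1 ⊆ (A.1 ∩ B.1) ∪ (C.1 \ A.1) := by
        intro x hx
        rw [mem_inter] at hx
        by_cases hxa : x ∈ A.1
        · exact mem_union_left _ (mem_inter.mpr ⟨hxa, hx.2⟩)
        · exact mem_union_right _ (mem_sdiff.mpr ⟨hx.1, hxa⟩)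
      have hCA : (C.1 \ A.1).card = 1 := by
        have h1 := card_inter_add_card_sdiff C.1 A.1
        have h2 : (C.1 ∩ A.1).card = 2 := by rw [inter_comm]; exact h.2
        rw [C.2, h2] at h1
        omega
      calc (C.1 ∩ B.1).card ≤ ((A.1 ∩ B.1) ∪ (C.1 \ A.1)).card := card_le_card hsub
        _ ≤ (A.1 ∩ B.1).card + (C.1 \ A.1).card := card_union_le _ _
        _ = (A.1 ∩ B.1).card + 1 := by rw [hCA]
    simp only [Walk.length_cons]
    omega

lemma johnson_dist (n : ℕ) (A B : {A : Finset (Fin n) // A.card = 3}) :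
    (johnsonGraph n 3).dist A B = 3 - (A.1 ∩ B.1).card := by
  have hc3 : (A.1 ∩ B.1).card ≤ 3 := by
    have := card_le_card (inter_subset_left : A.1 ∩ B.1 ⊆ A.1)
    rw [A.2] at this; exact this
  obtain ⟨w, hw⟩ := johnson_walk_le n (3 - (A.1 ∩ B.1).card) A B (by omega)
  have hub := (SimpleGraph.dist_le w).trans hw
  have hr : (johnsonGraph n 3).Reachable A B := ⟨w⟩
  obtain ⟨w', hw'⟩ := hr.exists_walk_length_eq_dist
  have hlb := johnson_walk_ge n w'
  omega

/-- For every `n ≥ 9`, the equidistant dimension of the Johnson graph `J(n,3)` is at most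
`n - 2`. -/
theorem eqdim_johnson_three_le (n : ℕ) (hn : 9 ≤ n) :
    eqdim (johnsonGraph n 3) ≤ n - 2 := by
  have h0 : (0:ℕ) < n := by omega
  set e0 : Fin n := ⟨0, by omega⟩ with he0
  set e1 : Fin n := ⟨1, by omega⟩ with he1
  have he01 : e0 ≠ e1 := by simp [he0, he1, Fin.ext_iff]
  set P : Finset (Fin n) := {e0, e1} with hP
  have hPcard : P.card = 2 := by
    rw [hP, card_insert_of_notMem (by simp [he01]), card_singleton]
  set S : Finset {A : Finset (Fin n) // A.card = 3} :=
    Finset.univ.filter (fun A => e0 ∈ A.1 ∧ e1 ∈ A.1) with hS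
  have hmemP : ∀ i : Fin n, i ∉ P → (insert i P).card = 3 := by
    intro i hi
    rw [card_insert_of_notMem hi, hPcard]
  -- cardinality of S
  have hScard : S.card = n - 2 := by
    have hbij : Pᶜ.card = S.card := by
      apply Finset.card_bij (fun i hi => (⟨insert i P, hmemP i (by simpa using hi)⟩ :
        {A : Finset (Fin n) // A.card = 3}))
      · intro a ha
        simp only [hS, mem_filter, mem_univ, true_and]
        constructor
        · exact mem_insert_of_mem (by simp [hP])
        · exact mem_insert_of_mem (by simp [hP])
      · intro a ha a' ha' hEq
        have hmem : a ∈ insert a' P := by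
          have := congrArg Subtype.val hEq
          simp only at this
          rw [← this]; exact mem_insert_self a P
        rcases mem_insert.mp hmem with h | h
        · exact h
        · exact absurd h (by simpa using ha)
      · intro A hA
        simp only [hS, mem_filter, mem_univ, true_and] at hA
        have hPsub : P ⊆ A.1 := by
          intro x hx
          rcases mem_insert.mp hx with h | h
          · exact h ▸ hA.1
          · rw [mem_singleton.mp h]; exact hA.2
        have hcd : (A.1 \ P).card = 1 := by
          rw [card_sdiff_of_subset hPsub, A.2, hPcard]
        obtain ⟨c, hc⟩ := card_pos.mp (by omega : 0 < (A.1 \ P).card)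
        rw [mem_sdiff] at hc
        refine ⟨c, by simpa using hc.2, ?_⟩
        apply Subtype.ext
        show insert c P = A.1
        apply eq_of_subset_of_card_le
        · intro x hx
          rcases mem_insert.mp hx with h | h
          · exact h ▸ hc.1
          · exact hPsub h
        · rw [A.2, hmemP c hc.2]
    have hcompl : Pᶜ.card = n - 2 := by
      rw [card_compl, hPcard, Fintype.card_fin]
    omega
  -- intersection computations
  have hint : ∀ (i : Fin n) (hi : i ∉ P) (u : {A : Finset (Fin n) // A.card = 3}),
      (u.1 ∩ (insert i P)).card =
        (if i ∈ u.1 then (P ∩ u.1).card + 1 else (P ∩ u.1).card) := by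
    intro i hi u
    rw [inter_comm]
    by_cases hiu : i ∈ u.1
    · rw [if_pos hiu, insert_inter_of_mem hiu,
        card_insert_of_notMem (fun hx => hi (mem_inter.mp hx).1)]
    · rw [if_neg hiu, insert_inter_of_notMem hiu]
  have hxS : ∀ (i : Fin n) (hi : i ∉ P),
      (⟨insert i P, hmemP i hi⟩ : {A : Finset (Fin n) // A.card = 3}) ∈ S := by
    intro i hi
    simp only [hS, mem_filter, mem_univ, true_and]
    exact ⟨mem_insert_of_mem (by simp [hP]), mem_insert_of_mem (by simp [hP])⟩
  have hcardP : ∀ u : {A : Finset (Fin n) // A.card = 3}, u ∉ S → (P ∩ u.1).card ≤ 1 := by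
    intro u hu
    by_contra hcon
    have hle : (P ∩ u.1).card ≤ 2 := hPcard ▸ card_le_card inter_subset_left
    have : P ∩ u.1 = P := eq_of_subset_of_card_le inter_subset_left (by omega)
    have hsub : P ⊆ u.1 := by rw [← this]; exact inter_subset_right
    apply hu
    simp only [hS, mem_filter, mem_univ, true_and]
    exact ⟨hsub (mem_insert_self _ _), hsub (mem_insert_of_mem (mem_singleton_self _))⟩
  -- the key claim
  have key : ∀ u v : {A : Finset (Fin n) // A.card = 3}, u ∉ S → v ∉ S → u ≠ v →
      (P ∩ u.1).card ≤ (P ∩ v.1).card →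
      ∃ x ∈ S, (johnsonGraph n 3).dist u x = (johnsonGraph n 3).dist v x := by
    intro u v hu hv huv hab
    have ha1 := hcardP u hu
    have hb1 := hcardP v hv
    by_cases hab' : (P ∩ u.1).card = (P ∩ v.1).card
    · -- pick i outside everything
      have hbig : ((P ∪ u.1 ∪ v.1)ᶜ).Nonempty := by
        rw [← card_pos, card_compl, Fintype.card_fin]
        have h1 : (P ∪ u.1 ∪ v.1).card ≤ P.card + u.1.card + v.1.card := by
          calc (P ∪ u.1 ∪ v.1).card ≤ (P ∪ u.1).card + v.1.card := card_union_le _ _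
            _ ≤ P.card + u.1.card + v.1.card := by
                have := card_union_le P u.1; omega
        rw [hPcard, u.2, v.2] at h1
        omega
      obtain ⟨i, hi⟩ := hbig
      simp only [mem_compl, mem_union, not_or] at hi
      obtain ⟨⟨hiP, hiu⟩, hiv⟩ := hi
      refine ⟨⟨insert i P, hmemP i hiP⟩, hxS i hiP, ?_⟩
      rw [johnson_dist, johnson_dist]
      have h1 := hint i hiP u
      have h2 := hint i hiP v
      rw [if_neg hiu] at h1
      rw [if_neg hiv] at h2
      simp only at h1 h2 ⊢
      omega
    · -- a < b, so a = 0, b = 1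
      have ha0 : (P ∩ u.1).card = 0 := by omega
      have hb1' : (P ∩ v.1).card = 1 := by omega
      have hPu : P ∩ u.1 = ∅ := card_eq_zero.mp ha0
      -- find i ∈ u \ v
      have huv' : u.1 ≠ v.1 := fun h => huv (Subtype.ext h)
      have hcd : (u.1 ∩ v.1).card < 3 := by
        by_contra hcon
        have hle : (u.1 ∩ v.1).card ≤ 3 := by
          have := card_le_card (inter_subset_left : u.1 ∩ v.1 ⊆ u.1)
          rw [u.2] at this; exact this
        have h1 : u.1 ∩ v.1 = u.1 := eq_of_subset_of_card_le inter_subset_left (by omega)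
        have h2 : u.1 ⊆ v.1 := by rw [← h1]; exact inter_subset_right
        exact huv' (eq_of_subset_of_card_le h2 (by rw [u.2, v.2]))
      have hne : (u.1 \ v.1).Nonempty := by
        rw [← card_pos]
        have := card_inter_add_card_sdiff u.1 v.1
        rw [u.2] at this
        omega
      obtain ⟨i, hi⟩ := hne
      rw [mem_sdiff] at hi
      have hiP : i ∉ P := by
        intro hx
        have : i ∈ P ∩ u.1 := mem_inter.mpr ⟨hx, hi.1⟩
        rw [hPu] at this
        exact absurd this (notMem_empty i)
      refine ⟨⟨insert i P, hmemP i hiP⟩, hxS i hiP, ?_⟩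
      rw [johnson_dist, johnson_dist]
      have h1 := hint i hiP u
      have h2 := hint i hiP v
      rw [if_pos hi.1] at h1
      rw [if_neg hi.2] at h2
      simp only at h1 h2 ⊢
      omega
  -- assemble
  have hSdeq : IsDistanceEqualizerSet (johnsonGraph n 3) ↑S := by
    intro u v hu hv huv
    rw [Finset.mem_coe] at hu hv
    rcases le_total ((P ∩ u.1).card) ((P ∩ v.1).card) with h | h
    · exact key u v hu hv huv h
    · obtain ⟨x, hx, hd⟩ := key v u hv hu huv.symm h
      exact ⟨x, hx, hd.symm⟩
  exact Nat.sInf_le ⟨S, hSdeq, hScard⟩
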